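/- Every connected bipartite graph G has a spanning tree T with α(T) = α(G). -/

import Mathlib

open Finset

variable {V : Type*}

/-- A stable (independent) set of vertices of `G`. -/
def IsStableSet (G : SimpleGraph V) (S : Finset V) : Prop :=
  ∀ u ∈ S, ∀ v ∈ S, ¬ G.Adj u v

/-- The stability number `α(G)`: the maximum cardinality of a stable set. -/
noncomputable def stabNum (G : SimpleGraph V) [Fintype V] : ℕ :=
  sSup {n : ℕ | ∃ S : Finset V, IsStableSet G S ∧ S.card = n}

/-- A stability system of `G`: a stable set of maximum cardinality. -/
def IsStabSystem (G : SimpleGraph V) [Fintype V] (S : Finset V) : Prop :=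
  IsStableSet G S ∧ S.card = stabNum G

/-- `G` is α⁻-stable: deleting any edge leaves the stability number unchanged. -/
def AlphaMinusStable (G : SimpleGraph V) [Fintype V] : Prop :=
  ∀ u v : V, G.Adj u v → stabNum (G.deleteEdges {s(u, v)}) = stabNum G

/-- `G` is α⁺-stable: adding any edge of the complement leaves the stability
number unchanged. -/
def AlphaPlusStable (G : SimpleGraph V) [Fintype V] : Prop :=
  ∀ u v : V, u ≠ v → ¬ G.Adj u v →
    stabNum (G ⊔ SimpleGraph.fromEdgeSet {s(u, v)}) = stabNum G

/-- A matching of `G`, viewed as a set of pairwise non-incident edges. -/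
def IsMatchingSet (G : SimpleGraph V) (M : Finset (Sym2 V)) : Prop :=
  (↑M : Set (Sym2 V)) ⊆ G.edgeSet ∧
    ∀ e ∈ M, ∀ f ∈ M, e ≠ f → ∀ v : V, ¬ (v ∈ e ∧ v ∈ f)

/-- The matching number `μ(G)`. -/
noncomputable def matchNum (G : SimpleGraph V) [Fintype V] : ℕ :=
  sSup {n : ℕ | ∃ M : Finset (Sym2 V), IsMatchingSet G M ∧ M.card = n}

/-- A maximum matching of `G`. -/
def IsMaximumMatching (G : SimpleGraph V) [Fintype V] (M : Finset (Sym2 V)) : Prop :=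
  IsMatchingSet G M ∧ M.card = matchNum G

/-- A perfect matching of `G`: a matching covering every vertex. -/
def IsPerfectMatchingSet (G : SimpleGraph V) (M : Finset (Sym2 V)) : Prop :=
  IsMatchingSet G M ∧ ∀ v : V, ∃ e ∈ M, v ∈ e

/-- A pendant vertex: a vertex of degree one. -/
def IsPendant (G : SimpleGraph V) (v : V) : Prop :=
  (G.neighborSet v).ncard = 1

/-- A set `D` is 2-dominating: every vertex outside `D` has at least two
neighbors in `D`. -/
def Is2Dominating (G : SimpleGraph V) (D : Finset V) : Prop :=
  ∀ v : V, v ∉ D → 2 ≤ ({u : V | u ∈ D ∧ G.Adj v u}).ncard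

/-- A chordal graph: no induced cycle on four or more vertices. -/
def IsChordal (G : SimpleGraph V) : Prop :=
  ∀ n : ℕ, 4 ≤ n → IsEmpty (SimpleGraph.cycleGraph n ↪g G)

/-- A bipartite graph: the vertex set is partitioned into two stable sets. -/
def IsBipartiteGr (G : SimpleGraph V) [Fintype V] [DecidableEq V] : Prop :=
  ∃ C : Finset V, IsStableSet G C ∧ IsStableSet G Cᶜ

/-- A strong unique independence graph: a graph with a unique stability system
whose complement is also stable. -/
def IsStrongUniqueIndep (G : SimpleGraph V) [Fintype V] [DecidableEq V] : Prop :=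
  ∃ S : Finset V, IsStabSystem G S ∧ (∀ S' : Finset V, IsStabSystem G S' → S' = S) ∧
    IsStableSet G Sᶜ

/-- A bistable bipartite graph: its two color classes are its only two
stability systems. -/
def IsBistable (G : SimpleGraph V) [Fintype V] [DecidableEq V] : Prop :=
  ∃ A : Finset V, IsStableSet G A ∧ IsStableSet G Aᶜ ∧
    IsStabSystem G A ∧ IsStabSystem G Aᶜ ∧ A ≠ Aᶜ ∧
    ∀ S : Finset V, IsStabSystem G S → S = A ∨ S = Aᶜ

/-- A vertex cover of `G`. -/
def IsVertexCover (G : SimpleGraph V) (C : Finset V) : Prop :=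
  ∀ u v : V, G.Adj u v → u ∈ C ∨ v ∈ C

/-- A minimum vertex cover of `G`. -/
def IsMinVertexCover (G : SimpleGraph V) [Fintype V] (C : Finset V) : Prop :=
  IsVertexCover G C ∧ ∀ C' : Finset V, IsVertexCover G C' → C.card ≤ C'.card

/-!
Extend a maximum matching `M` of `G` to a spanning tree `T`; this is possible because a matching
is a forest. In every graph `α + μ ≤ n`, since each edge of a matching has an endpoint outside a
given stable set. For bipartite `G` with colour classes `A` and `Aᶜ` the reverse inequality
`n ≤ α(G) + μ(G)` holds (König–Egerváry): if `T₀ ⊆ A` has maximal deficiency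
`d = |T₀| - |N(T₀)|`, then `T₀ ∪ (Aᶜ \ N(T₀))` is stable of size `|Aᶜ| + d`, and the deficiency
version of Hall's theorem gives a matching of size `|A| - d`. Hence
`α(T) ≤ n - μ(T) ≤ n - |M| = n - μ(G) = α(G)`, while `α(G) ≤ α(T)` as `T ≤ G`.
-/

open SimpleGraph

variable {G H : SimpleGraph V}

theorem IsMatchingSet.mono {M : Finset (Sym2 V)} (hM : IsMatchingSet H M)
    (h : H ≤ G) : IsMatchingSet G M :=
  ⟨hM.1.trans (edgeSet_mono h), hM.2⟩

theorem IsMatchingSet.fromEdgeSet_le {M : Finset (Sym2 V)} (hM : IsMatchingSet G M) :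
    fromEdgeSet (M : Set (Sym2 V)) ≤ G :=
  (SimpleGraph.fromEdgeSet_le G).2 (Set.sdiff_subset.trans hM.1)

theorem IsMatchingSet.isMatchingSet_fromEdgeSet {M : Finset (Sym2 V)}
    (hM : IsMatchingSet G M) : IsMatchingSet (fromEdgeSet (M : Set (Sym2 V))) M := by
  refine ⟨fun e he => ?_, hM.2⟩
  rw [edgeSet_fromEdgeSet]
  exact ⟨he, not_isDiag_of_mem_edgeSet G (hM.1 he)⟩

theorem IsMatchingSet.isAcyclic_fromEdgeSet {M : Finset (Sym2 V)} (hM : IsMatchingSet G M) :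
    (fromEdgeSet (M : Set (Sym2 V))).IsAcyclic := by
  refine isAcyclic_iff_forall_adj_isBridge.2 fun u v ⟨huv, hne⟩ => isBridge_iff.2 ?_
  -- in the matching with `uv` deleted, `u` is isolated
  rintro ⟨_ | ⟨⟨⟨huw, hne'⟩, hdel⟩, _⟩⟩
  · exact hne rfl
  · exact hM.2 _ huw _ huv (fun h => hdel ⟨h, hne'⟩) u ⟨Sym2.mem_mk_left _ _,
      Sym2.mem_mk_left _ _⟩

section Finite

variable [Fintype V]

theorem bddAbove_stableSet_cards (G : SimpleGraph V) :
    BddAbove {n : ℕ | ∃ S : Finset V, IsStableSet G S ∧ #S = n} :=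
  ⟨Fintype.card V, fun _ ⟨S, _, hS⟩ => hS ▸ S.card_le_univ⟩

theorem card_le_stabNum {S : Finset V} (hS : IsStableSet G S) : #S ≤ stabNum G :=
  le_csSup (bddAbove_stableSet_cards G) ⟨S, hS, rfl⟩

theorem exists_isStabSystem (G : SimpleGraph V) : ∃ S : Finset V, IsStabSystem G S := by
  have hne : {n : ℕ | ∃ S : Finset V, IsStableSet G S ∧ #S = n}.Nonempty :=
    ⟨0, ∅, by simp [IsStableSet], rfl⟩
  exact Nat.sSup_mem hne (bddAbove_stableSet_cards G)

theorem stabNum_anti (h : H ≤ G) : stabNum G ≤ stabNum H := by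
  obtain ⟨S, hS, hcard⟩ := exists_isStabSystem G
  exact hcard ▸ card_le_stabNum fun u hu v hv huv => hS u hu v hv (h huv)

theorem bddAbove_matchingSet_cards (G : SimpleGraph V) :
    BddAbove {n : ℕ | ∃ M : Finset (Sym2 V), IsMatchingSet G M ∧ #M = n} :=
  ⟨Fintype.card (Sym2 V), fun _ ⟨M, _, hM⟩ => hM ▸ M.card_le_univ⟩

theorem card_le_matchNum {M : Finset (Sym2 V)} (hM : IsMatchingSet G M) : #M ≤ matchNum G :=
  le_csSup (bddAbove_matchingSet_cards G) ⟨M, hM, rfl⟩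

theorem exists_isMaximumMatching (G : SimpleGraph V) :
    ∃ M : Finset (Sym2 V), IsMaximumMatching G M := by
  have hne : {n : ℕ | ∃ M : Finset (Sym2 V), IsMatchingSet G M ∧ #M = n}.Nonempty :=
    ⟨0, ∅, by simp [IsMatchingSet], rfl⟩
  exact Nat.sSup_mem hne (bddAbove_matchingSet_cards G)

theorem stabNum_add_matchNum_le_card (G : SimpleGraph V) :
    stabNum G + matchNum G ≤ Fintype.card V := by
  classical
  obtain ⟨S, hS, hScard⟩ := exists_isStabSystem G
  obtain ⟨M, ⟨hMG, hMdisj⟩, hMcard⟩ := exists_isMaximumMatching G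
  have hMS : #M ≤ #Sᶜ := by
    refine card_le_card_of_forall_subsingleton (fun e v => v ∈ e) (fun e he => ?_)
      fun v _ e₁ ⟨he₁, hv₁⟩ e₂ ⟨he₂, hv₂⟩ =>
        by_contra fun hne => hMdisj e₁ he₁ e₂ he₂ hne v ⟨hv₁, hv₂⟩
    induction e using Sym2.ind with
    | h u v =>
      by_cases hu : u ∈ S
      · exact ⟨v, mem_compl.2 fun hv => hS u hu v hv (hMG he), Sym2.mem_mk_right _ _⟩
      · exact ⟨u, mem_compl.2 hu, Sym2.mem_mk_left _ _⟩
  have := card_add_card_compl S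
  omega

theorem card_le_matchNum_of_injective {ι : Type*} [Fintype ι] (a b : ι → V)
    (hadj : ∀ i, G.Adj (a i) (b i)) (ha : Function.Injective a) (hb : Function.Injective b)
    (hab : ∀ i j, a i ≠ b j) : Fintype.card ι ≤ matchNum G := by
  classical
  have hend : ∀ i j, ∀ v ∈ s(a i, b i), v ∈ s(a j, b j) → i = j := by
    intro i j v hi hj
    rcases Sym2.mem_iff.1 hi with rfl | rfl <;> rcases Sym2.mem_iff.1 hj with h | h
    · exact ha h
    · exact absurd h (hab i j)
    · exact absurd h.symm (hab j i)
    · exact hb h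
  let M := (univ : Finset ι).image fun i => s(a i, b i)
  have hM : IsMatchingSet G M := by
    refine ⟨fun e he => ?_, fun e he f hf hne v ⟨hve, hvf⟩ => ?_⟩
    · obtain ⟨i, -, rfl⟩ := mem_image.1 he
      exact hadj i
    · obtain ⟨i, -, rfl⟩ := mem_image.1 he
      obtain ⟨j, -, rfl⟩ := mem_image.1 hf
      exact hne (by rw [hend i j v hve hvf])
  have hMcard : #M = Fintype.card ι :=
    card_image_of_injective _ fun i j h =>
      hend i j (a i) (Sym2.mem_mk_left _ _) (h ▸ Sym2.mem_mk_left _ _)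
  exact hMcard ▸ card_le_matchNum hM

theorem card_le_matchNum_add_of_forall_card_le [DecidableEq V] [DecidableRel G.Adj] {A : Finset V}
    (hA : IsStableSet G A) {d : ℕ}
    (hd : ∀ T ⊆ A, #T ≤ #(T.biUnion (G.neighborFinset ·)) + d) : #A ≤ matchNum G + d := by
  -- Hall's theorem, after adding `d` new vertices joined to every vertex of `A`
  let t : A → Finset (V ⊕ Fin d) := fun a => (G.neighborFinset a).disjSum univ
  have hall : ∀ s : Finset A, #s ≤ #(s.biUnion t) := by
    intro s
    rcases s.eq_empty_or_nonempty with rfl | ⟨a₀, ha₀⟩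
    · simp
    set N := (s.map (.subtype _)).biUnion (G.neighborFinset ·)
    have hsub : N.disjSum univ ⊆ s.biUnion t := by
      rintro (v | j) hx
      · obtain ⟨u, hu, huv⟩ := mem_biUnion.1 (inl_mem_disjSum.1 hx)
        obtain ⟨a, ha, rfl⟩ := mem_map.1 hu
        exact mem_biUnion.2 ⟨a, ha, inl_mem_disjSum.2 huv⟩
      · exact mem_biUnion.2 ⟨a₀, ha₀, inr_mem_disjSum.2 (mem_univ j)⟩
    calc #s = #(s.map (.subtype _)) := (card_map _).symm
      _ ≤ #N + d := hd _ fun v hv => by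
          obtain ⟨a, -, rfl⟩ := mem_map.1 hv
          exact a.2
      _ = #(N.disjSum univ) := by rw [card_disjSum, card_univ, Fintype.card_fin]
      _ ≤ #(s.biUnion t) := card_le_card hsub
  obtain ⟨f, hf, hft⟩ := (all_card_le_biUnion_card_iff_exists_injective t).1 hall
  have hadj : ∀ a (h : (f a).isLeft), G.Adj a ((f a).getLeft h) := by
    intro a h
    have := hft a
    rw [← Sum.inl_getLeft (f a) h] at this
    exact (mem_neighborFinset _ _ _).1 (inl_mem_disjSum.1 this)
  have hL : #(univ.filter fun a => (f a).isLeft) ≤ matchNum G := by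
    refine (Fintype.card_coe _).symm.trans_le (card_le_matchNum_of_injective
      (fun a => a.1.1) (fun a => (f a).getLeft (mem_filter.1 a.2).2)
      (fun a => hadj a _) (fun a b h => Subtype.ext (Subtype.ext h)) (fun a b h => ?_)
      fun a b h => hA _ b.1.2 _ a.1.2 (h ▸ hadj b _))
    refine Subtype.ext (hf ?_)
    rw [← Sum.inl_getLeft (f a) (mem_filter.1 a.2).2,
      ← Sum.inl_getLeft (f b) (mem_filter.1 b.2).2]
    exact congrArg _ h
  have hR : #(univ.filter fun a => ¬ (f a).isLeft) ≤ d := by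
    refine (card_le_card_of_injOn f (t := univ.map .inr) (fun a ha => ?_) hf.injOn).trans
      (by simp)
    cases hfa : f a <;> simp_all
  have := card_filter_add_card_filter_not (s := univ) fun a => (f a).isLeft
  rw [card_univ, Fintype.card_coe] at this
  omega

theorem card_add_card_compl_le_stabNum_add_card_biUnion [DecidableEq V] [DecidableRel G.Adj]
    {A T : Finset V} (hAc : IsStableSet G Aᶜ) (hT : IsStableSet G T) (hTA : T ⊆ A) :
    #T + #Aᶜ ≤ stabNum G + #(T.biUnion (G.neighborFinset ·)) := by
  set N := T.biUnion (G.neighborFinset ·)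
  have hS : IsStableSet G (T ∪ (Aᶜ \ N)) := by
    have hcross : ∀ u ∈ T, ∀ v ∈ Aᶜ \ N, ¬ G.Adj u v := fun u hu v hv huv =>
      (mem_sdiff.1 hv).2 (mem_biUnion.2 ⟨u, hu, (mem_neighborFinset _ _ _).2 huv⟩)
    intro u hu v hv
    rcases mem_union.1 hu with hu | hu <;> rcases mem_union.1 hv with hv | hv
    · exact hT u hu v hv
    · exact hcross u hu v hv
    · exact fun huv => hcross v hv u hu huv.symm
    · exact hAc u (mem_sdiff.1 hu).1 v (mem_sdiff.1 hv).1
  have hdisj : Disjoint T (Aᶜ \ N) :=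
    Finset.disjoint_left.2 fun v hv hv' => mem_compl.1 (mem_sdiff.1 hv').1 (hTA hv)
  have := card_le_stabNum hS
  rw [card_union_of_disjoint hdisj] at this
  have := card_le_card_sdiff_add_card (s := Aᶜ) (t := N)
  omega

theorem IsBipartiteGr.card_le_stabNum_add_matchNum [DecidableEq V] (hG : IsBipartiteGr G) :
    Fintype.card V ≤ stabNum G + matchNum G := by
  classical
  obtain ⟨A, hA, hAc⟩ := hG
  let deficiency (T : Finset V) : ℤ := #T - #(T.biUnion (G.neighborFinset ·))
  obtain ⟨T₀, hT₀A, hT₀max⟩ :=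
    A.powerset.exists_max_image deficiency ⟨∅, empty_mem_powerset A⟩
  rw [mem_powerset] at hT₀A
  have hmatch := card_le_matchNum_add_of_forall_card_le hA
    (d := #T₀ - #(T₀.biUnion (G.neighborFinset ·))) fun T hT => by
      have := hT₀max T (mem_powerset.2 hT)
      simp only [deficiency] at this
      omega
  have hstab := card_add_card_compl_le_stabNum_add_card_biUnion hAc
    (fun u hu v hv => hA u (hT₀A hu) v (hT₀A hv)) hT₀A
  -- comparing with `T = ∅`, the deficiency of `T₀` is nonnegative
  have hempty := hT₀max ∅ (empty_mem_powerset A)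
  simp only [deficiency, card_empty, biUnion_empty] at hempty
  have := card_add_card_compl A
  omega

end Finite

/-- Every connected bipartite graph `G` has a spanning tree `T`
with `α(T) = α(G)`. -/
theorem stmt10 {V : Type*} [Fintype V] [DecidableEq V] (G : SimpleGraph V)
    (hc : G.Connected) (hbip : IsBipartiteGr G) :
    ∃ T : SimpleGraph V, T ≤ G ∧ T.IsTree ∧ stabNum T = stabNum G := by
  obtain ⟨M, hM⟩ := exists_isMaximumMatching G
  obtain ⟨T, hMT, hTG, hT⟩ :=
    hc.exists_isTree_le_of_le_of_isAcyclic hM.1.fromEdgeSet_le hM.1.isAcyclic_fromEdgeSet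
  refine ⟨T, hTG, hT, le_antisymm ?_ (stabNum_anti hTG)⟩
  have hμ : matchNum G ≤ matchNum T :=
    hM.2 ▸ card_le_matchNum (hM.1.isMatchingSet_fromEdgeSet.mono hMT)
  have := stabNum_add_matchNum_le_card T
  have := hbip.card_le_stabNum_add_matchNum
  omega
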